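/- arXiv:math/0407375 — 4 statements merged into one kernel-verified Lean document; each statement's English description precedes it below -/
import Mathlib

section
/- Let G be a chordal graph (every cycle of length > 3 has a chord) on the vertex set [n] = {1,...,n} without loops, multiple edges, or isolated vertices. Then the clique complex Δ(G) is a quasi-forest. -/
set_option maxHeartbeats 1000000
set_option synthInstance.maxHeartbeats 400000

open MvPolynomial

/-- A simple graph is chordal if every cycle of length > 3 has a chord, i.e. an edge of the
graph joining two vertices of the cycle which is not an edge of the cycle. -/
def SimpleGraph.IsChordal {V : Type*} (G : SimpleGraph V) : Prop :=
  ∀ (v : V) (c : G.Walk v v), c.IsCycle → 3 < c.length →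
    ∃ u w, u ∈ c.support ∧ w ∈ c.support ∧ G.Adj u w ∧ s(u, w) ∉ c.edges

/-- `F` is a facet of the clique complex `Δ(G)`, i.e. a maximal clique of `G`. -/
def SimpleGraph.IsFacet {V : Type*} (G : SimpleGraph V) (F : Finset V) : Prop :=
  G.IsClique (F : Set V) ∧ ∀ F' : Finset V, G.IsClique (F' : Set V) → F ⊆ F' → F' = F

/-- `v` is a free vertex of the facet `F` of `Δ(G)`: it belongs to no other facet. -/
def SimpleGraph.IsFreeVertex {V : Type*} (G : SimpleGraph V) (F : Finset V) (v : V) : Prop :=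
  v ∈ F ∧ ∀ F' : Finset V, G.IsFacet F' → v ∈ F' → F' = F

/-- `F` is a facet of `Δ(G)` admitting a free vertex. -/
def SimpleGraph.IsFreeFacet {V : Type*} (G : SimpleGraph V) (F : Finset V) : Prop :=
  G.IsFacet F ∧ ∃ v, G.IsFreeVertex F v

/-- `F` is a leaf of the simplicial complex whose facets are the members of the list `fs`:
there is a branch `B ≠ F` among them such that `H ∩ F ⊆ B ∩ F` for all facets `H ≠ F`. -/
def IsLeafIn {V : Type*} [DecidableEq V] (fs : List (Finset V)) (F : Finset V) : Prop :=
  ∃ B ∈ fs, B ≠ F ∧ ∀ H ∈ fs, H ≠ F → H ∩ F ⊆ B ∩ F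

/-- A simplicial complex, given by its set of facets, is a quasi-forest if its facets can be
ordered `F_1, …, F_r` so that for each `i ≥ 2`, `F_i` is a leaf of the subcomplex
`⟨F_1, …, F_i⟩`. -/
def IsQuasiForest {V : Type*} [DecidableEq V] (facets : Set (Finset V)) : Prop :=
  ∃ L : List (Finset V), L.Nodup ∧ (∀ F, F ∈ L ↔ F ∈ facets) ∧
    ∀ (i : ℕ) (h : i < L.length), 0 < i → IsLeafIn (L.take (i + 1)) L[i]


/-!
By Dirac's lemma a nonempty chordal graph has a simplicial vertex `v`, i.e. one whose
neighbourhood `N` is a clique; then `insert v N` is the only facet of the clique complex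
containing `v`. Deleting `v` leaves a chordal graph whose facets are the old ones, except that
`insert v N` is replaced by `N` when `N` is maximal there. By induction the smaller complex is a
quasi-forest, and `insert v N` either takes the place of `N` in its leaf ordering or is appended
as a leaf, with any facet containing `N` as its branch.
-/

namespace SimpleGraph

variable {V : Type*} {G : SimpleGraph V}

namespace Walk

lemma mem_edges_of_length_eq_one {x y : V} {p : G.Walk x y} (h : p.length = 1) :
    s(x, y) ∈ p.edges := by
  cases p with
  | nil => simp at h
  | cons _ q => cases q with
    | nil => simp
    | cons => simp at h

lemma exists_shorter_of_chord_at_start {x y b : V} (p : G.Walk x y) (hb : b ∈ p.support)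
    (hxb : G.Adj x b) (he : s(x, b) ∉ p.edges) :
    ∃ q : G.Walk x y, q.length < p.length ∧ q.support ⊆ p.support := by
  classical
  refine ⟨cons hxb (p.dropUntil b hb), ?_, ?_⟩
  · have hlen := congrArg length (p.take_spec hb)
    have h0 : (p.takeUntil b hb).length ≠ 0 := fun h => hxb.ne (eq_of_length_eq_zero h)
    have h1 : (p.takeUntil b hb).length ≠ 1 := fun h =>
      he (p.edges_takeUntil_subset_edges hb (mem_edges_of_length_eq_one h))
    rw [length_append] at hlen
    rw [length_cons]
    omega
  · rw [support_cons, List.cons_subset]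
    exact ⟨p.start_mem_support, p.support_dropUntil_subset_support hb⟩

lemma exists_shorter_of_chord {x y a b : V} (p : G.Walk x y) (ha : a ∈ p.support)
    (hb : b ∈ p.support) (hab : G.Adj a b) (he : s(a, b) ∉ p.edges) :
    ∃ q : G.Walk x y, q.length < p.length ∧ q.support ⊆ p.support := by
  induction p with
  | nil =>
    simp only [support_nil, List.mem_singleton] at ha hb
    exact absurd (ha.trans hb.symm) hab.ne
  | cons h p ih =>
    rcases List.mem_cons.1 (support_cons h p ▸ ha) with rfl | ha'
    · exact exists_shorter_of_chord_at_start _ hb hab he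
    rcases List.mem_cons.1 (support_cons h p ▸ hb) with rfl | hb'
    · rw [Sym2.eq_swap] at he
      exact exists_shorter_of_chord_at_start _ ha hab.symm he
    obtain ⟨q, hlen, hsub⟩ := ih ha' hb' fun h' => he (by simp [h'])
    refine ⟨cons h q, by simpa using hlen, ?_⟩
    rw [support_cons, support_cons]
    exact List.cons_subset_cons _ hsub

lemma exists_isPath_isChordless_support_subset {x y : V} (p : G.Walk x y) :
    ∃ q : G.Walk x y, q.IsPath ∧ q.IsChordless ∧ q.support ⊆ p.support := by
  classical
  obtain ⟨r, hr, hmin⟩ := exists_minimalFor_of_wellFoundedLT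
    (fun q : G.Walk x y => q.support ⊆ p.support) length ⟨p, List.Subset.refl _⟩
  refine ⟨r.bypass, r.bypass_isPath, ?_, List.Subset.trans r.support_bypass_subset_support hr⟩
  rw [isChordless_iff_forall_mem_edges]
  intro a b ha hb hab
  by_contra he
  obtain ⟨q, hlen, hsub⟩ := r.bypass.exists_shorter_of_chord ha hb hab he
  have hle := r.length_bypass_le_length
  have := hmin (List.Subset.trans (List.Subset.trans hsub r.support_bypass_subset_support) hr)
    (by omega)
  omega

end Walk

open Walk in
/-- Otherwise a shortest such walk closes up through `v` to a chordless cycle of length at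
least four. -/
theorem IsChordal.adj_of_walk (hG : G.IsChordal) {v x y : V} (hxv : G.Adj x v)
    (hyv : G.Adj y v) (hxy : x ≠ y) (p : G.Walk x y) (hvp : v ∉ p.support)
    (hp : ∀ z ∈ p.support, G.Adj z v → z = x ∨ z = y) : G.Adj x y := by
  by_contra hnxy
  obtain ⟨q, hq, hqc, hsub⟩ := p.exists_isPath_isChordless_support_subset
  have hvq : v ∉ q.support := fun h => hvp (hsub h)
  have hlen : 2 ≤ q.length := by
    have h0 : q.length ≠ 0 := fun h => hxy (eq_of_length_eq_zero h)
    have h1 : q.length ≠ 1 := fun h => hnxy (adj_of_length_eq_one h)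
    omega
  let c : G.Walk v v := cons hxv.symm (q.concat hyv)
  have hc : c.IsCycle := by
    refine (cons_isCycle_iff _ _).2 ⟨hq.concat hvq hyv, fun he => ?_⟩
    rw [edges_concat, List.concat_eq_append, List.mem_append, List.mem_singleton] at he
    rcases he with he | he
    · exact hvq (q.fst_mem_support_of_mem_edges he)
    · grind
  obtain ⟨a, b, ha, hb, hab, he⟩ := hG v c hc (by simp [c]; omega)
  simp only [c, support_cons, support_concat, edges_cons, edges_concat, List.concat_eq_append,
    List.mem_cons, List.mem_append, List.not_mem_nil, or_false,
    Sym2.eq_swap (a := y), not_or] at ha hb he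
  replace ha : a = v ∨ a ∈ q.support := by tauto
  replace hb : b = v ∨ b ∈ q.support := by tauto
  have hqv : ∀ z ∈ q.support, G.Adj z v → z = x ∨ z = y := fun z hz => hp z (hsub hz)
  rcases ha with rfl | ha <;> rcases hb with rfl | hb
  · exact hab.ne rfl
  · rcases hqv b hb hab.symm with rfl | rfl <;> simp_all
  · rcases hqv a ha hab with rfl | rfl <;> simp_all [Sym2.eq_swap]
  · exact he.2.1 (hqc.mem_edges ha hb hab)

open Walk in
theorem IsChordal.isClique_attachments (hG : G.IsChordal) {u v : V} {W : Set V}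
    (hW : ∀ t ∈ W, t ≠ v ∧ ¬ G.Adj t v) :
    G.IsClique {x | G.Adj x v ∧ ∃ c, G.Adj x c ∧ ∃ p : G.Walk u c, ∀ t ∈ p.support, t ∈ W} := by
  rintro x ⟨hxv, cx, hxc, px, hpx⟩ y ⟨hyv, cy, hyc, py, hpy⟩ hxy
  have hpW : ∀ t ∈ (px.reverse.append py).support, t ∈ W := by
    intro t ht
    rw [mem_support_append_iff, support_reverse, List.mem_reverse] at ht
    exact ht.elim (hpx t) (hpy t)
  refine hG.adj_of_walk hxv hyv hxy (cons hxc ((px.reverse.append py).concat hyc.symm)) ?_ ?_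
  · simp only [support_cons, support_concat, List.mem_cons, List.mem_append,
      List.not_mem_nil, or_false, not_or]
    exact ⟨hxv.ne.symm, fun h => (hW v (hpW v h)).1 rfl, hyv.ne.symm⟩
  · intro z hz hzv
    simp only [support_cons, support_concat, List.mem_cons, List.mem_append,
      List.not_mem_nil, or_false] at hz
    rcases hz with rfl | hz | rfl
    · exact Or.inl rfl
    · exact absurd hzv (hW z (hpW z hz)).2
    · exact Or.inr rfl

def IsSimplicialIn (G : SimpleGraph V) (U : Finset V) (v : V) : Prop :=
  v ∈ U ∧ G.IsClique ((U : Set V) ∩ G.neighborSet v)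

open Finset in
/-- The neighbours of `v` attached to the component `C` of `u` outside the closed neighbourhood
of `v` form a clique `S` separating `C` from `v`; a simplicial vertex of `C ∪ S` chosen outside
`S` is simplicial in `U` as well. -/
theorem IsChordal.exists_isSimplicialIn_not_adj (hG : G.IsChordal) {U : Finset V}
    (ih : ∀ U' ⊂ U, ∀ K : Set V, G.IsClique K → (∃ u ∈ U', u ∉ K) →
      ∃ s ∉ K, G.IsSimplicialIn U' s)
    {u v : V} (hv : v ∈ U) (hu : u ∈ U) (huv : u ≠ v) (hadj : ¬ G.Adj u v) :
    ∃ s, G.IsSimplicialIn U s ∧ s ≠ v ∧ ¬ G.Adj s v := by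
  classical
  set W : Set V := {t | t ∈ U ∧ t ≠ v ∧ ¬ G.Adj t v}
  set C : Finset V := U.filter fun c => ∃ p : G.Walk u c, ∀ t ∈ p.support, t ∈ W
  set S : Finset V := U.filter fun x =>
    G.Adj x v ∧ ∃ c, G.Adj x c ∧ ∃ p : G.Walk u c, ∀ t ∈ p.support, t ∈ W
  have hS : G.IsClique (S : Set V) :=
    (hG.isClique_attachments (u := u) fun t ht => ht.2).subset fun x hx => (mem_filter.1 hx).2
  have hCW : ∀ c ∈ C, c ∈ W := fun c hc => by
    obtain ⟨-, p, hp⟩ := mem_filter.1 hc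
    exact hp c p.end_mem_support
  have huC : u ∈ C := mem_filter.2 ⟨hu, .nil, by simp [W, hu, huv, hadj]⟩
  have hCS : C ∪ S ⊂ U := by
    refine (ssubset_iff_of_subset (union_subset (filter_subset _ _) (filter_subset _ _))).2
      ⟨v, hv, ?_⟩
    intro h
    rcases mem_union.1 h with h | h
    · exact (hCW v h).2.1 rfl
    · exact G.irrefl (mem_filter.1 h).2.1
  obtain ⟨s, hsS, hs⟩ :=
    ih _ hCS S hS ⟨u, mem_union_left _ huC, fun h => hadj (mem_filter.1 h).2.1⟩
  have hsC : s ∈ C := (mem_union.1 hs.1).resolve_right hsS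
  obtain ⟨p, hp⟩ := (mem_filter.1 hsC).2
  obtain ⟨hsU, hsv, hsadj⟩ := hCW s hsC
  refine ⟨s, ⟨hsU, hs.2.subset ?_⟩, hsv, hsadj⟩
  rintro t ⟨htU, hst : G.Adj s t⟩
  refine ⟨?_, hst⟩
  by_cases htv : G.Adj t v
  · exact mem_union_right _ (mem_filter.2 ⟨htU, htv, s, hst.symm, p, hp⟩)
  have htW : t ∈ W := ⟨htU, by rintro rfl; exact hsadj hst, htv⟩
  refine mem_union_left _ (mem_filter.2 ⟨htU, p.concat hst, fun z hz => ?_⟩)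
  rw [Walk.support_concat, List.mem_append, List.mem_singleton] at hz
  exact hz.elim (hp z) fun h => h ▸ htW

/-- Dirac's lemma, strengthened so that it carries its own induction: the clique is the
separator produced by `IsChordal.exists_isSimplicialIn_not_adj`. -/
theorem IsChordal.exists_isSimplicialIn_notMem (hG : G.IsChordal) (U : Finset V) {K : Set V}
    (hK : G.IsClique K) (hUK : ∃ u ∈ U, u ∉ K) : ∃ s ∉ K, G.IsSimplicialIn U s := by
  induction U using Finset.strongInduction generalizing K with
  | H U ih =>
  obtain ⟨u, hu, huK⟩ := hUK
  by_cases hU : G.IsClique (U : Set V)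
  · exact ⟨u, huK, hu, hU.subset Set.inter_subset_left⟩
  obtain ⟨v, hv, ⟨w, hw, hwv, hwadj⟩, hKv⟩ : ∃ v ∈ U, (∃ w ∈ U, w ≠ v ∧ ¬ G.Adj w v) ∧
      ∀ k ∈ K, k ∈ U → k = v ∨ G.Adj k v := by
    by_cases h : ∃ k ∈ K, k ∈ U ∧ ∃ w ∈ U, w ≠ k ∧ ¬ G.Adj w k
    · obtain ⟨k, hk, hkU, hw⟩ := h
      exact ⟨k, hkU, hw, fun k' hk' _ => (eq_or_ne k' k).imp_right (hK hk' hk)⟩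
    push Not at h
    obtain ⟨v, hv, w, hw, hvw, hvwadj⟩ : ∃ v ∈ U, ∃ w ∈ U, v ≠ w ∧ ¬ G.Adj v w := by
      simpa [IsClique, Set.Pairwise] using hU
    refine ⟨v, hv, ⟨w, hw, hvw.symm, fun h => hvwadj h.symm⟩, fun k hk hkU => ?_⟩
    exact (eq_or_ne k v).imp_right fun hkv => (h k hk hkU v hv hkv.symm).symm
  obtain ⟨s, hs, hsv, hsadj⟩ :=
    hG.exists_isSimplicialIn_not_adj (fun U' hU' _ hK' => ih U' hU' hK') hv hw hwv hwadj
  refine ⟨s, fun hsK => ?_, hs⟩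
  rcases hKv s hsK hs.1 with rfl | h
  exacts [hsv rfl, hsadj h]

theorem IsChordal.exists_isSimplicialIn (hG : G.IsChordal) {U : Finset V} (hU : U.Nonempty) :
    ∃ s, G.IsSimplicialIn U s := by
  obtain ⟨s, -, hs⟩ := hG.exists_isSimplicialIn_notMem U (K := ∅) (by simp)
    (hU.imp fun _ hu => ⟨hu, Set.notMem_empty _⟩)
  exact ⟨s, hs⟩

end SimpleGraph

section QuasiForest

variable {V : Type*} [DecidableEq V]

def IsLeafOrder (L : List (Finset V)) : Prop :=
  ∀ (i : ℕ) (h : i < L.length), 0 < i → IsLeafIn (L.take (i + 1)) L[i]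

lemma IsLeafIn.map {fs : List (Finset V)} {X : Finset V} {φ : Finset V → Finset V}
    (hinj : Set.InjOn φ {H | H ∈ fs})
    (hinter : ∀ H ∈ fs, ∀ K ∈ fs, H ≠ K → φ H ∩ φ K = H ∩ K)
    (hX : X ∈ fs) (h : IsLeafIn fs X) : IsLeafIn (fs.map φ) (φ X) := by
  obtain ⟨B, hB, hBX, hleaf⟩ := h
  refine ⟨φ B, List.mem_map_of_mem hB, fun h => hBX (hinj hB hX h), ?_⟩
  simp only [List.mem_map]
  rintro _ ⟨H, hH, rfl⟩ hφHX
  have hHX : H ≠ X := fun h => hφHX (h ▸ rfl)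
  rw [hinter H hH X hX hHX, hinter B hB X hX hBX]
  exact hleaf H hH hHX

lemma IsLeafOrder.map {L : List (Finset V)} {φ : Finset V → Finset V}
    (hinj : Set.InjOn φ {H | H ∈ L})
    (hinter : ∀ H ∈ L, ∀ K ∈ L, H ≠ K → φ H ∩ φ K = H ∩ K)
    (hL : IsLeafOrder L) : IsLeafOrder (L.map φ) := by
  intro i hi hpos
  rw [List.length_map] at hi
  have hsub := List.take_subset (i + 1) L
  have hi' : L[i] ∈ L.take (i + 1) := by
    rw [← List.getElem_take (j := i + 1) (h := by simp; omega)]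
    exact List.getElem_mem _
  rw [List.getElem_map, ← List.map_take]
  exact (hL i hi hpos).map (hinj.mono fun H hH => hsub hH)
    (fun H hH K hK => hinter H (hsub hH) K (hsub hK)) hi'

lemma IsLeafOrder.append_singleton {L : List (Finset V)} {F : Finset V} (hL : IsLeafOrder L)
    (hF : IsLeafIn (L ++ [F]) F) : IsLeafOrder (L ++ [F]) := by
  intro i hi hpos
  rw [List.length_append, List.length_singleton] at hi
  rcases Nat.lt_succ_iff_lt_or_eq.1 hi with hi | rfl
  · rw [List.getElem_append_left hi, List.take_append_of_le_length hi]
    exact hL i hi hpos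
  · rw [List.getElem_concat_length rfl, List.take_of_length_le (by simp)]
    exact hF

/-- If `F₀` is a facet, `insert v F₀` takes its place in the ordering; otherwise it is appended
as a leaf whose branch is `B`. -/
theorem IsQuasiForest.insert_insert_sdiff {𝓕 : Set (Finset V)} (h𝓕 : IsQuasiForest 𝓕) {v : V}
    {F₀ B : Finset V} (hv : ∀ H ∈ 𝓕, v ∉ H) (hB : B ∈ 𝓕) (hF₀B : F₀ ⊆ B) :
    IsQuasiForest (insert (insert v F₀) (𝓕 \ {F₀})) := by
  obtain ⟨L, hnd, hmem, hL : IsLeafOrder L⟩ := h𝓕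
  have hvF₀ : v ∉ F₀ := fun h => hv B hB (hF₀B h)
  by_cases hF₀ : F₀ ∈ 𝓕
  · set φ := Function.update id F₀ (insert v F₀)
    have hinter : ∀ H ∈ L, ∀ K ∈ L, H ≠ K → φ H ∩ φ K = H ∩ K := by
      intro H hH K hK hHK
      have hvH := hv H ((hmem H).1 hH)
      have hvK := hv K ((hmem K).1 hK)
      by_cases hHF : H = F₀ <;> by_cases hKF : K = F₀ <;>
        simp_all [φ, Finset.insert_inter_of_notMem, Finset.inter_insert_of_notMem]
    have hinj : Set.InjOn φ {H | H ∈ L} := by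
      have hext : ∀ X, X ⊆ φ X := fun X => by
        by_cases hX : X = F₀ <;> simp [φ, hX, Finset.subset_insert]
      intro H hH K hK hHK
      by_contra hne
      have h := hinter H hH K hK hne
      rw [← hHK, Finset.inter_self] at h
      exact hne (subset_antisymm (fun z hz => (Finset.mem_inter.1 (h ▸ hext H hz)).2)
        (fun z hz => (Finset.mem_inter.1 (h ▸ hHK ▸ hext K hz)).1))
    refine ⟨L.map φ, hnd.map_on fun H hH K hK => hinj hH hK, fun F => ?_, hL.map hinj hinter⟩
    simp only [List.mem_map, hmem, Set.mem_insert_iff, Set.mem_sdiff, Set.mem_singleton_iff]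
    constructor
    · rintro ⟨H, hH, rfl⟩
      by_cases hHF : H = F₀ <;> simp_all [φ]
    · rintro (rfl | ⟨hF, hFF₀⟩)
      · exact ⟨F₀, hF₀, by simp [φ]⟩
      · exact ⟨F, hF, by simp [φ, hFF₀]⟩
  · have hF : insert v F₀ ∉ L := fun h => hv _ ((hmem _).1 h) (Finset.mem_insert_self v F₀)
    refine ⟨L ++ [insert v F₀], hnd.append (List.nodup_singleton _) ?_, fun F => ?_,
      hL.append_singleton ⟨B, by simp [(hmem B).2 hB], ?_, ?_⟩⟩
    · simpa using hF
    · simp [hmem, Set.sdiff_singleton_eq_self hF₀, or_comm]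
    · rintro rfl
      exact hv _ hB (Finset.mem_insert_self v F₀)
    · intro H hH hHF z hz
      have hH𝓕 : H ∈ 𝓕 := (hmem H).1 (by simpa [hHF] using hH)
      obtain ⟨hzH, hzF⟩ := Finset.mem_inter.1 hz
      have hzv : z ≠ v := fun h => hv H hH𝓕 (h ▸ hzH)
      exact Finset.mem_inter.2 ⟨hF₀B ((Finset.mem_insert.1 hzF).resolve_left hzv), hzF⟩

theorem isQuasiForest_singleton (F : Finset V) : IsQuasiForest {F} :=
  ⟨[F], List.nodup_singleton F, by simp, fun i hi hpos => by simp at hi; omega⟩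

end QuasiForest

namespace SimpleGraph

variable {V : Type*} {G : SimpleGraph V}

def facetsIn (G : SimpleGraph V) (U : Finset V) : Set (Finset V) :=
  {F | Maximal (fun C : Finset V => C ⊆ U ∧ G.IsClique (C : Set V)) F}

lemma facetsIn_empty : G.facetsIn ∅ = {∅} := by
  ext F
  simp only [facetsIn, Finset.subset_empty, Set.mem_ofPred_eq, Set.mem_singleton_iff]
  exact ⟨fun h => h.1.1, fun h => ⟨⟨h, h ▸ by simp⟩, fun C hC _ => hC.1 ▸ h ▸ le_rfl⟩⟩

lemma facetsIn_univ [Fintype V] : G.facetsIn Finset.univ = {F | G.IsFacet F} := by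
  ext F
  simp only [facetsIn, IsFacet, Maximal, Finset.subset_univ, true_and, Set.mem_ofPred_eq]
  refine and_congr_right fun _ => forall₂_congr fun C _ => imp_congr_right fun hFC => ?_
  exact ⟨fun hCF => subset_antisymm hCF hFC, fun h => h.le⟩

lemma exists_mem_facetsIn_superset {U C : Finset V} (hCU : C ⊆ U)
    (hC : G.IsClique (C : Set V)) : ∃ F ∈ G.facetsIn U, C ⊆ F := by
  have hfin : {C : Finset V | C ⊆ U ∧ G.IsClique (C : Set V)}.Finite :=
    U.powerset.finite_toSet.subset fun C hC => Finset.mem_powerset.2 hC.1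
  obtain ⟨F, hCF, hF⟩ := hfin.exists_le_maximal ⟨hCU, hC⟩
  exact ⟨F, hF, hCF⟩

lemma filter_adj_subset_erase [DecidableEq V] [DecidableRel G.Adj] (U : Finset V) (v : V) :
    U.filter (G.Adj v) ⊆ U.erase v := fun _ hw =>
  Finset.mem_erase.2 ⟨(G.ne_of_adj (Finset.mem_filter.1 hw).2).symm, (Finset.mem_filter.1 hw).1⟩

lemma IsSimplicialIn.isClique_filter_adj [DecidableRel G.Adj] {U : Finset V} {v : V}
    (hv : G.IsSimplicialIn U v) : G.IsClique (U.filter (G.Adj v) : Set V) := by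
  rw [Finset.coe_filter]
  exact hv.2

open Finset in
lemma IsSimplicialIn.facetsIn_eq [DecidableEq V] [DecidableRel G.Adj] {U : Finset V} {v : V}
    (hv : G.IsSimplicialIn U v) :
    G.facetsIn U =
      insert (insert v (U.filter (G.Adj v))) (G.facetsIn (U.erase v) \ {U.filter (G.Adj v)}) := by
  set N := U.filter (G.Adj v)
  have hNU : N ⊆ U.erase v := filter_adj_subset_erase U v
  have hvN : v ∉ N := fun h => notMem_erase v U (hNU h)
  have hN : G.IsClique (N : Set V) := hv.isClique_filter_adj
  have hvN' : G.IsClique ((insert v N : Finset V) : Set V) := by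
    rw [coe_insert]; exact hN.insert fun w hw _ => (mem_filter.1 hw).2
  have hle : ∀ C : Finset V, C ⊆ U → G.IsClique (C : Set V) → v ∈ C → C ⊆ insert v N := by
    intro C hCU hC hvC w hw
    rcases eq_or_ne v w with rfl | hvw
    · exact mem_insert_self _ _
    · exact mem_insert_of_mem (mem_filter.2 ⟨hCU hw, hC hvC hw hvw⟩)
  have hmax : insert v N ∈ G.facetsIn U :=
    ⟨⟨insert_subset hv.1 (filter_subset _ _), hvN'⟩,
      fun C hC hNC => hle C hC.1 hC.2 (hNC (mem_insert_self _ _))⟩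
  ext H
  simp only [Set.mem_insert_iff, Set.mem_sdiff, Set.mem_singleton_iff]
  constructor
  · intro hH
    by_cases hvH : v ∈ H
    · have hHN := hle H hH.1.1 hH.1.2 hvH
      exact Or.inl (le_antisymm hHN (hH.2 hmax.1 hHN))
    refine Or.inr ⟨⟨⟨subset_erase.2 ⟨hH.1.1, hvH⟩, hH.1.2⟩,
      fun C hC hHC => hH.2 ⟨hC.1.trans (erase_subset _ _), hC.2⟩ hHC⟩, ?_⟩
    rintro rfl
    exact hvN (hH.2 hmax.1 (subset_insert _ _) (mem_insert_self _ _))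
  · rintro (rfl | ⟨hH, hHN⟩)
    · exact hmax
    refine ⟨⟨hH.1.1.trans (erase_subset _ _), hH.1.2⟩, fun C hC hHC => ?_⟩
    by_cases hvC : v ∈ C
    · have hHN' : H ⊆ N := fun w hw =>
        (mem_insert.1 (hle C hC.1 hC.2 hvC (hHC hw))).resolve_left
          fun h => (mem_erase.1 (hH.1.1 hw)).1 h
      exact absurd (subset_antisymm hHN' (hH.2 ⟨hNU, hN⟩ hHN')) hHN
    · exact hH.2 ⟨subset_erase.2 ⟨hC.1, hvC⟩, hC.2⟩ hHC

theorem IsChordal.isQuasiForest_facetsIn [DecidableEq V] (hG : G.IsChordal) (U : Finset V) :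
    IsQuasiForest (G.facetsIn U) := by
  classical
  induction U using Finset.strongInduction with
  | H U ih =>
  rcases U.eq_empty_or_nonempty with rfl | hU
  · rw [facetsIn_empty]
    exact isQuasiForest_singleton ∅
  obtain ⟨v, hv⟩ := hG.exists_isSimplicialIn hU
  obtain ⟨B, hB, hNB⟩ :=
    exists_mem_facetsIn_superset (filter_adj_subset_erase U v) hv.isClique_filter_adj
  rw [hv.facetsIn_eq]
  exact (ih _ (Finset.erase_ssubset hv.1)).insert_insert_sdiff
    (fun H hH hvH => (Finset.mem_erase.1 (hH.1.1 hvH)).1 rfl) hB hNB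

end SimpleGraph

theorem cliqueComplex_of_chordal_isQuasiForest_general {n : ℕ} (G : SimpleGraph (Fin n))
    (hchordal : G.IsChordal) :
    IsQuasiForest {F : Finset (Fin n) | G.IsFacet F} :=
  G.facetsIn_univ ▸ hchordal.isQuasiForest_facetsIn Finset.univ

/-- The clique complex of a chordal graph is a quasi-forest. -/
theorem cliqueComplex_of_chordal_isQuasiForest {n : ℕ} (G : SimpleGraph (Fin n))
    (hchordal : G.IsChordal) (hiso : ∀ v : Fin n, ∃ w, G.Adj v w) :
    IsQuasiForest {F : Finset (Fin n) | G.IsFacet F} :=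
  cliqueComplex_of_chordal_isQuasiForest_general G hchordal
end

section
/- Let K be a field, S = K[x_1,...,x_n], F ⊆ [n] a nonempty subset, J the ideal generated by all monomials x_i x_j with i,j ∈ F and i < j, and x = Σ_{i∈F} x_i. Then for any i ∈ F there is a K-algebra isomorphism (S/J)/x(S/J) ≅ S_i/Q², where S_i = K[x_1,...,x_{i-1},x_{i+1},...,x_n] and Q is the ideal of S_i generated by the variables x_j with j ∈ F, j ≠ i. -/
open MvPolynomial

/-!
Modulo `x`, the variable `x_i` equals `-∑_{j ∈ F, j ≠ i} x_j`, so substituting this for `x_i` gives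
`S/(x) ≅ S_i`. Modulo `x` the ideal `J` becomes the square of `P = (x_j : j ∈ F)`, because
`x_a² = x_a x - ∑_{j ≠ a} x_a x_j`; and the substitution maps `P` onto `Q`, hence `P²` onto `Q²`.
-/

namespace Ideal

variable {R A B : Type*} [CommRing R] [CommRing A] [CommRing B] [Algebra R A] [Algebra R B]

noncomputable def quotQuotSpanSingletonAlgEquiv (I : Ideal A) (a : A) :
    ((A ⧸ I) ⧸ span {Quotient.mk I a}) ≃ₐ[R] A ⧸ I ⊔ span {a} :=
  (quotientEquivAlgOfEq R (by rw [map_span, Set.image_singleton]; rfl)).trans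
    (DoubleQuot.quotQuotEquivQuotSupₐ R I (span {a}))

noncomputable def quotientSupKerAlgEquivOfSurjective {f : A →ₐ[R] B}
    (hf : Function.Surjective f) (I : Ideal A) :
    (A ⧸ I ⊔ RingHom.ker f) ≃ₐ[R] B ⧸ I.map f :=
  (quotientEquivAlgOfEq R (by
      rw [RingHom.ker_eq_comap_bot f, ← comap_map_of_surjective f hf]
      ext a
      simp [Quotient.eq_zero_iff_mem])).trans
    (quotientKerAlgEquivOfSurjective (f := (Quotient.mkₐ R (I.map f)).comp f)
      ((Quotient.mkₐ_surjective R _).comp hf))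

end Ideal

namespace MvPolynomial

variable {R σ : Type*} [CommRing R]

section ElimVar

variable [DecidableEq σ]

noncomputable def elimVar (i : σ) (p : MvPolynomial {j // j ≠ i} R) :
    MvPolynomial σ R →ₐ[R] MvPolynomial {j // j ≠ i} R :=
  aeval fun k => if h : k = i then p else X ⟨k, h⟩

variable (i : σ) (p : MvPolynomial {j // j ≠ i} R)

@[simp]
theorem elimVar_X_self : elimVar i p (X i) = p := by
  simp [elimVar]

@[simp]
theorem elimVar_X_of_ne {k : σ} (hk : k ≠ i) : elimVar i p (X k) = X ⟨k, hk⟩ := by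
  simp [elimVar, hk]

theorem elimVar_comp_rename : (elimVar i p).comp (rename Subtype.val) = AlgHom.id R _ := by
  ext j
  simp [elimVar_X_of_ne i p j.2]

@[simp]
theorem elimVar_rename (q : MvPolynomial {j // j ≠ i} R) : elimVar i p (rename Subtype.val q) = q :=
  DFunLike.congr_fun (elimVar_comp_rename i p) q

theorem elimVar_surjective : Function.Surjective (elimVar i p) :=
  fun q => ⟨rename Subtype.val q, elimVar_rename i p q⟩

theorem ker_elimVar :
    RingHom.ker (elimVar i p) = Ideal.span {X i - rename Subtype.val p} := by
  set d : MvPolynomial σ R := X i - rename Subtype.val p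
  refine le_antisymm (fun f hf => ?_) (Ideal.span_le.2 <| Set.singleton_subset_iff.2 <| by simp [d])
  have hsection : (Ideal.Quotient.mkₐ R (Ideal.span {d})).comp
      ((rename Subtype.val).comp (elimVar i p)) = Ideal.Quotient.mkₐ R (Ideal.span {d}) := by
    ext k
    by_cases hk : k = i
    · subst hk
      simpa using (Ideal.Quotient.eq.2 (Ideal.mem_span_singleton_self d)).symm
    · simp [hk]
  rw [← Ideal.Quotient.eq_zero_iff_mem, ← Ideal.Quotient.mkₐ_eq_mk R, ← hsection]
  simp [RingHom.mem_ker.1 hf]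

theorem map_elimVar_span_X (F : Finset σ)
    (hp : p ∈ Ideal.span {q | ∃ j : {j // j ≠ i}, (j : σ) ∈ F ∧ q = X j}) :
    (Ideal.span {q | ∃ a ∈ F, q = X a}).map (elimVar i p) =
      Ideal.span {q | ∃ j : {j // j ≠ i}, (j : σ) ∈ F ∧ q = X j} := by
  rw [Ideal.map_span]
  refine le_antisymm (Ideal.span_le.2 ?_) (Ideal.span_le.2 ?_)
  · rintro _ ⟨_, ⟨a, ha, rfl⟩, rfl⟩
    by_cases h : a = i
    · subst h
      simpa using hp
    · rw [elimVar_X_of_ne i p h]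
      exact Ideal.subset_span ⟨⟨a, h⟩, ha, rfl⟩
  · rintro _ ⟨j, hj, rfl⟩
    exact Ideal.subset_span (s := _ '' _) ⟨X j, ⟨j, hj, rfl⟩, elimVar_X_of_ne i p j.2⟩

theorem X_sub_rename_neg_sum_X {F : Finset σ} (hi : i ∈ F) :
    X i - rename Subtype.val (-∑ j ∈ F.subtype (· ≠ i), X j : MvPolynomial {j // j ≠ i} R) =
      ∑ j ∈ F, X j := by
  rw [map_neg, map_sum, sub_neg_eq_add]
  simp only [rename_X]
  rw [Finset.sum_subtype_eq_sum_filter (fun j => (X j : MvPolynomial σ R)), Finset.filter_ne',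
    Finset.add_sum_erase _ _ hi]

end ElimVar

theorem span_X_mul_X_sup_span_sum_X [LinearOrder σ] (F : Finset σ) :
    Ideal.span {q | ∃ a ∈ F, ∃ b ∈ F, a < b ∧ q = (X a * X b : MvPolynomial σ R)} ⊔
        Ideal.span {∑ j ∈ F, X j} =
      Ideal.span {q | ∃ a ∈ F, q = X a} ^ 2 ⊔ Ideal.span {∑ j ∈ F, X j} := by
  set J := Ideal.span {q | ∃ a ∈ F, ∃ b ∈ F, a < b ∧ q = (X a * X b : MvPolynomial σ R)}
  set x : MvPolynomial σ R := ∑ j ∈ F, X j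
  have hJ : ∀ a ∈ F, ∀ b ∈ F, a ≠ b → X a * X b ∈ J := by
    intro a ha b hb hab
    rcases hab.lt_or_gt with h | h
    · exact Ideal.subset_span ⟨a, ha, b, hb, h, rfl⟩
    · rw [mul_comm]
      exact Ideal.subset_span ⟨b, hb, a, ha, h, rfl⟩
  refine le_antisymm (sup_le_sup_right ?_ _) (sup_le ?_ le_sup_right)
  · refine Ideal.span_le.2 ?_
    rintro _ ⟨a, ha, b, hb, -, rfl⟩
    rw [SetLike.mem_coe, pow_two]
    exact Ideal.mul_mem_mul (Ideal.subset_span ⟨a, ha, rfl⟩) (Ideal.subset_span ⟨b, hb, rfl⟩)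
  rw [pow_two, Ideal.span_mul_span', Ideal.span_le]
  rintro _ ⟨_, ⟨a, ha, rfl⟩, _, ⟨b, hb, rfl⟩, rfl⟩
  obtain rfl | hab := eq_or_ne a b
  · have hsq : X a * X a = X a * x - ∑ j ∈ F.erase a, X a * X j := by
      rw [Finset.mul_sum, ← Finset.add_sum_erase _ _ ha]
      ring
    show X a * X a ∈ J ⊔ Ideal.span {x}
    rw [hsq]
    exact sub_mem (Ideal.mem_sup_right (Ideal.mul_mem_left _ _ (Ideal.mem_span_singleton_self x)))
      (Ideal.sum_mem _ fun j hj => Ideal.mem_sup_left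
        (hJ a ha j (Finset.mem_of_mem_erase hj) (Finset.ne_of_mem_erase hj).symm))
  · exact Ideal.mem_sup_left (hJ a ha b hb hab)

end MvPolynomial

theorem quot_by_sum_iso_general (K : Type*) [Field K] {n : ℕ} (F : Finset (Fin n))
    (J : Ideal (MvPolynomial (Fin n) K))
    (hJ : J = Ideal.span {p | ∃ i ∈ F, ∃ j ∈ F, i < j ∧ p = X i * X j})
    (i : Fin n) (hi : i ∈ F)
    (Q : Ideal (MvPolynomial {j : Fin n // j ≠ i} K))
    (hQ : Q = Ideal.span {p | ∃ j : {j : Fin n // j ≠ i}, (j : Fin n) ∈ F ∧ p = X j}) :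
    Nonempty
      (((MvPolynomial (Fin n) K ⧸ J) ⧸
          Ideal.span {Ideal.Quotient.mk J (∑ j ∈ F, X j)}) ≃ₐ[K]
        (MvPolynomial {j : Fin n // j ≠ i} K ⧸ Q ^ 2)) := by
  subst hJ hQ
  set p : MvPolynomial {j : Fin n // j ≠ i} K := -∑ j ∈ F.subtype (· ≠ i), X j
  have hp : p ∈ Ideal.span {q | ∃ j : {j : Fin n // j ≠ i}, (j : Fin n) ∈ F ∧ q = X j} :=
    neg_mem <| Ideal.sum_mem _ fun j hj => Ideal.subset_span ⟨j, Finset.mem_subtype.1 hj, rfl⟩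
  have hker : RingHom.ker (elimVar i p) = Ideal.span {∑ j ∈ F, X j} := by
    rw [ker_elimVar, X_sub_rename_neg_sum_X i hi]
  exact ⟨(Ideal.quotQuotSpanSingletonAlgEquiv _ _).trans <|
    (Ideal.quotientEquivAlgOfEq K (by rw [span_X_mul_X_sup_span_sum_X, hker])).trans <|
    (Ideal.quotientSupKerAlgEquivOfSurjective (elimVar_surjective i p) _).trans <|
    Ideal.quotientEquivAlgOfEq K (by rw [Ideal.map_pow, map_elimVar_span_X i p F hp])⟩

/-- Let `F ⊆ [n]` be nonempty, `J ⊆ S = K[x_1,…,x_n]` the ideal generated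
by the monomials `x_i x_j` with `i, j ∈ F`, `i < j`, and `x = ∑_{i ∈ F} x_i`.  Then for any
`i ∈ F` there is a `K`-algebra isomorphism `(S/J)/x(S/J) ≅ S_i/Q²`, where `S_i` is the
polynomial ring on the variables `x_j`, `j ≠ i`, and `Q = ({x_j : j ∈ F, j ≠ i})`. -/
theorem quot_by_sum_iso (K : Type*) [Field K] {n : ℕ} (F : Finset (Fin n))
    (hF : F.Nonempty) (J : Ideal (MvPolynomial (Fin n) K))
    (hJ : J = Ideal.span {p | ∃ i ∈ F, ∃ j ∈ F, i < j ∧ p = X i * X j})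
    (i : Fin n) (hi : i ∈ F)
    (Q : Ideal (MvPolynomial {j : Fin n // j ≠ i} K))
    (hQ : Q = Ideal.span {p | ∃ j : {j : Fin n // j ≠ i}, (j : Fin n) ∈ F ∧ p = X j}) :
    Nonempty
      (((MvPolynomial (Fin n) K ⧸ J) ⧸
          Ideal.span {Ideal.Quotient.mk J (∑ j ∈ F, X j)}) ≃ₐ[K]
        (MvPolynomial {j : Fin n // j ≠ i} K ⧸ Q ^ 2)) :=
  quot_by_sum_iso_general K F J hJ i hi Q hQ
end

section
/- Let R be a Noetherian commutative ring, S = R[x_1,...,x_n], 0 ≤ k < n, and I_1,...,I_k ideals of R. For T ⊆ [n] let L_T ⊆ S be the ideal generated by all x_i x_j with i,j ∈ T, i < j, let X_T = ({x_j : j ∈ T})S, and for T ⊆ [k] let I_T = Σ_{j∈T} I_j S. Then: (1) L_T = ∩_{ℓ∈T} X_{T\{ℓ}} for every T ⊆ [n]; and (2) the ideal J = (I_1 x_1,...,I_k x_k, L_{[n]}) satisfies J = ∩_{T ⊆ [k]} ∩_{ℓ ∈ [n]\([k]\T)} (I_T + X_{[n]\{ℓ}}). -/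
set_option maxHeartbeats 1000000
set_option synthInstance.maxHeartbeats 400000

open MvPolynomial

private lemma mem_spanX_iff {R : Type*} [CommRing R] {n : ℕ} (T : Finset (Fin n))
    (p : MvPolynomial (Fin n) R) :
    p ∈ Ideal.span {q : MvPolynomial (Fin n) R | ∃ j ∈ T, q = X j} ↔
      ∀ m ∈ p.support, ∃ j ∈ T, (m : Fin n →₀ ℕ) j ≠ 0 := by
  have hset : {q : MvPolynomial (Fin n) R | ∃ j ∈ T, q = X j}
      = X '' {j : Fin n | j ∈ T} := by
    ext q; simp [eq_comm]
  rw [hset, mem_ideal_span_X_image]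
  simp

private lemma mem_spanL_iff {R : Type*} [CommRing R] {n : ℕ} (T : Finset (Fin n))
    (p : MvPolynomial (Fin n) R) :
    p ∈ Ideal.span {q : MvPolynomial (Fin n) R | ∃ i ∈ T, ∃ j ∈ T, i < j ∧ q = X i * X j} ↔
      ∀ m ∈ p.support, ∃ i ∈ T, ∃ j ∈ T, i < j ∧ (m : Fin n →₀ ℕ) i ≠ 0 ∧ m j ≠ 0 := by
  have hset : {q : MvPolynomial (Fin n) R | ∃ i ∈ T, ∃ j ∈ T, i < j ∧ q = X i * X j}
      = (fun s => monomial s (1 : R)) ''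
        {s : Fin n →₀ ℕ | ∃ i ∈ T, ∃ j ∈ T, i < j ∧ s = Finsupp.single i 1 + Finsupp.single j 1} := by
    ext q
    constructor
    · rintro ⟨i, hi, j, hj, hij, rfl⟩
      exact ⟨_, ⟨i, hi, j, hj, hij, rfl⟩, by
        rw [← pow_one (X i), ← pow_one (X j), X_pow_eq_monomial, X_pow_eq_monomial,
          monomial_mul, one_mul]⟩
    · rintro ⟨s, ⟨i, hi, j, hj, hij, rfl⟩, rfl⟩
      exact ⟨i, hi, j, hj, hij, by
        rw [← pow_one (X i), ← pow_one (X j), X_pow_eq_monomial, X_pow_eq_monomial,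
          monomial_mul, one_mul]⟩
  rw [hset, mem_ideal_span_monomial_image]
  refine forall₂_congr fun m hm => ?_
  constructor
  · rintro ⟨s, ⟨i, hi, j, hj, hij, rfl⟩, hle⟩
    refine ⟨i, hi, j, hj, hij, ?_, ?_⟩
    · have := hle i
      simp [Finsupp.single_apply, hij.ne] at this
      omega
    · have := hle j
      simp [Finsupp.single_apply, hij.ne'] at this
      omega
  · rintro ⟨i, hi, j, hj, hij, h1, h2⟩
    refine ⟨_, ⟨i, hi, j, hj, hij, rfl⟩, fun a => ?_⟩
    simp only [Finsupp.coe_add, Pi.add_apply, Finsupp.single_apply]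
    rcases eq_or_ne i a with rfl | hia
    · simp [hij.ne']; omega
    · rcases eq_or_ne j a with rfl | hja
      · simp [hia]; omega
      · simp [hia, hja]

private lemma coeff_single_mem {R : Type*} [CommRing R] {n : ℕ} (𝔞 : Ideal R) (ℓ : Fin n)
    (p : MvPolynomial (Fin n) R)
    (hp : p ∈ Ideal.map (C : R →+* MvPolynomial (Fin n) R) 𝔞 ⊔
      Ideal.span {q : MvPolynomial (Fin n) R | ∃ j ∈ Finset.univ.erase ℓ, q = X j}) (e : ℕ) :
    coeff (Finsupp.single ℓ e) p ∈ 𝔞 := by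
  rcases Submodule.mem_sup.mp hp with ⟨q, hq, r, hr, rfl⟩
  have h1 : coeff (Finsupp.single ℓ e) q ∈ 𝔞 := MvPolynomial.mem_map_C_iff.mp hq _
  have h2 : coeff (Finsupp.single ℓ e) r = 0 := by
    by_contra h
    obtain ⟨j, hj, hj'⟩ := (mem_spanX_iff _ _).mp hr _ (mem_support_iff.mpr h)
    rw [Finsupp.single_apply] at hj'
    exact hj' (if_neg fun hlj => (Finset.mem_erase.mp hj).1 hlj.symm)
  rw [coeff_add, h2, add_zero]
  exact h1

private lemma monomial_two_var {R : Type*} [CommRing R] {n : ℕ} {m : Fin n →₀ ℕ}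
    {i j : Fin n} (hij : i ≠ j) (hi : m i ≠ 0) (hj : m j ≠ 0) (c : R) :
    monomial (m - Finsupp.single i 1 - Finsupp.single j 1) c * (X i * X j) = monomial m c := by
  rw [← pow_one (X i), ← pow_one (X j), X_pow_eq_monomial, X_pow_eq_monomial,
    monomial_mul, monomial_mul, mul_one, mul_one]
  have hs : m - Finsupp.single i 1 - Finsupp.single j 1
      + (Finsupp.single i 1 + Finsupp.single j 1) = m := by
    ext a
    simp only [Finsupp.add_apply, Finsupp.tsub_apply, Finsupp.single_apply]
    by_cases h1 : i = a
    · subst h1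
      rw [if_pos rfl, if_neg (fun h => hij h.symm)]
      omega
    · rw [if_neg h1]
      by_cases h2 : j = a
      · subst h2
        rw [if_pos rfl]
        omega
      · rw [if_neg h2]
        omega
  rw [hs]

private lemma monomial_single_eq {R : Type*} [CommRing R] {n : ℕ} (ℓ : Fin n) {e : ℕ}
    (he : e ≠ 0) (c : R) :
    monomial (Finsupp.single ℓ (e - 1)) 1 * (C c * X ℓ) = monomial (Finsupp.single ℓ e) c := by
  rw [← pow_one (X ℓ), C_mul_X_pow_eq_monomial, monomial_mul, one_mul, ← Finsupp.single_add,
    Nat.sub_add_cancel (Nat.one_le_iff_ne_zero.mpr he)]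


/-- In `S = R[x_1,…,x_n]` with `R` Noetherian and `0 ≤ k < n`, for
`T ⊆ [n]` let `L_T` be the ideal generated by all `x_i x_j`, `i, j ∈ T`, `i < j`, and
`X_T = ({x_j : j ∈ T})`; for `T ⊆ [k]` let `I_T = ∑_{j ∈ T} I_j S`.  Then
(1) `L_T = ⋂_{ℓ ∈ T} X_{T \ {ℓ}}` for every nonempty `T ⊆ [n]`, and
(2) `J = (I_1 x_1, …, I_k x_k, L_{[n]})` satisfies
`J = ⋂_{T ⊆ [k]} ⋂_{ℓ ∈ [n] \ ([k] \ T)} (I_T + X_{[n] \ {ℓ}})`. -/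
theorem ideal_decomposition {R : Type*} [CommRing R] [IsNoetherianRing R]
    {n k : ℕ} (hk : k < n) (I : Fin k → Ideal R)
    (L : Finset (Fin n) → Ideal (MvPolynomial (Fin n) R))
    (hL : ∀ T, L T = Ideal.span {p | ∃ i ∈ T, ∃ j ∈ T, i < j ∧ p = X i * X j})
    (XI : Finset (Fin n) → Ideal (MvPolynomial (Fin n) R))
    (hXI : ∀ T, XI T = Ideal.span {p | ∃ j ∈ T, p = X j})
    (IT : Finset (Fin k) → Ideal (MvPolynomial (Fin n) R))
    (hIT : ∀ T, IT T = ⨆ j ∈ T, Ideal.map (C : R →+* MvPolynomial (Fin n) R) (I j))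
    (J : Ideal (MvPolynomial (Fin n) R))
    (hJ : J = Ideal.span
      ({p | ∃ (i : Fin k) (a : R), a ∈ I i ∧ p = C a * X (Fin.castLE hk.le i)} ∪
       {p | ∃ i j : Fin n, i < j ∧ p = X i * X j})) :
    (∀ T : Finset (Fin n), T.Nonempty → L T = ⨅ ℓ ∈ T, XI (T.erase ℓ)) ∧
    J = ⨅ T : Finset (Fin k),
          ⨅ ℓ ∈ (Finset.univ \
            (((Finset.univ : Finset (Fin k)) \ T).image (Fin.castLE hk.le))),
            (IT T ⊔ XI (Finset.univ.erase ℓ)) := by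
  constructor
  · -- Part 1
    intro T hT
    rw [hL]
    apply le_antisymm
    · refine le_iInf fun ℓ => le_iInf fun hℓ => ?_
      rw [hXI]
      refine Ideal.span_le.mpr ?_
      rintro q ⟨i, hi, j, hj, hij, rfl⟩
      by_cases hiℓ : i = ℓ
      · have hjℓ : j ≠ ℓ := by rw [← hiℓ]; exact hij.ne'
        exact Ideal.mul_mem_left _ (X i)
          (Ideal.subset_span ⟨j, Finset.mem_erase.mpr ⟨hjℓ, hj⟩, rfl⟩)
      · exact Ideal.mul_mem_right (X j) _
          (Ideal.subset_span ⟨i, Finset.mem_erase.mpr ⟨hiℓ, hi⟩, rfl⟩)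
    · intro p hp
      simp only [Ideal.mem_iInf, hXI] at hp
      refine (mem_spanL_iff T p).mpr fun m hm => ?_
      obtain ⟨ℓ0, hℓ0⟩ := hT
      obtain ⟨j1, hj1, hmj1⟩ := (mem_spanX_iff _ _).mp (hp ℓ0 hℓ0) m hm
      rw [Finset.mem_erase] at hj1
      obtain ⟨j2, hj2, hmj2⟩ := (mem_spanX_iff _ _).mp (hp j1 hj1.2) m hm
      rw [Finset.mem_erase] at hj2
      rcases lt_trichotomy j1 j2 with hlt | heq | hlt
      · exact ⟨j1, hj1.2, j2, hj2.2, hlt, hmj1, hmj2⟩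
      · exact absurd heq.symm hj2.1
      · exact ⟨j2, hj2.2, j1, hj1.2, hlt, hmj2, hmj1⟩
  · -- Part 2
    have hITmap : ∀ T : Finset (Fin k), IT T
        = Ideal.map (C : R →+* MvPolynomial (Fin n) R) (⨆ j ∈ T, I j) := by
      intro T
      rw [hIT, Ideal.map_iSup]
      exact iSup_congr fun j => (Ideal.map_iSup _ _).symm
    apply le_antisymm
    · rw [hJ]
      refine Ideal.span_le.mpr fun q hq => ?_
      simp only [SetLike.mem_coe, Ideal.mem_iInf]
      intro T ℓ hℓ
      rcases hq with ⟨i, a, ha, rfl⟩ | ⟨i, j, hij, rfl⟩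
      · by_cases hli : ℓ = Fin.castLE hk.le i
        · have hiT : i ∈ T := by
            by_contra hiT
            rw [Finset.mem_sdiff] at hℓ
            exact hℓ.2 (Finset.mem_image.mpr
              ⟨i, Finset.mem_sdiff.mpr ⟨Finset.mem_univ _, hiT⟩, hli.symm⟩)
          refine Ideal.mem_sup_left (Ideal.mul_mem_right _ _ ?_)
          rw [hIT]
          exact (le_iSup₂ (f := fun j (_ : j ∈ T) =>
            Ideal.map (C : R →+* MvPolynomial (Fin n) R) (I j)) i hiT)
            (Ideal.mem_map_of_mem _ ha)
        · refine Ideal.mem_sup_right (Ideal.mul_mem_left _ _ ?_)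
          rw [hXI]
          exact Ideal.subset_span
            ⟨_, Finset.mem_erase.mpr ⟨fun h => hli h.symm, Finset.mem_univ _⟩, rfl⟩
      · by_cases hiℓ : i = ℓ
        · have hjℓ : j ≠ ℓ := by rw [← hiℓ]; exact hij.ne'
          refine Ideal.mem_sup_right (Ideal.mul_mem_left _ _ ?_)
          rw [hXI]
          exact Ideal.subset_span ⟨j, Finset.mem_erase.mpr ⟨hjℓ, Finset.mem_univ _⟩, rfl⟩
        · refine Ideal.mem_sup_right (Ideal.mul_mem_right _ _ ?_)
          rw [hXI]
          exact Ideal.subset_span ⟨i, Finset.mem_erase.mpr ⟨hiℓ, Finset.mem_univ _⟩, rfl⟩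
    · intro p hp
      simp only [Ideal.mem_iInf] at hp
      have hco : ∀ (T : Finset (Fin k)) (ℓ : Fin n),
          ℓ ∈ Finset.univ \ (((Finset.univ : Finset (Fin k)) \ T).image (Fin.castLE hk.le)) →
          ∀ e, coeff (Finsupp.single ℓ e) p ∈ ⨆ j ∈ T, I j := by
        intro T ℓ hℓ e
        have h := hp T ℓ hℓ
        rw [hITmap, hXI] at h
        exact coeff_single_mem _ _ _ h e
      have hout : ∀ ℓ : Fin n, k ≤ (ℓ : ℕ) → ∀ e, coeff (Finsupp.single ℓ e) p = 0 := by
        intro ℓ hℓ e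
        have hmem : ℓ ∈ Finset.univ \
            (((Finset.univ : Finset (Fin k)) \ (∅ : Finset (Fin k))).image (Fin.castLE hk.le)) := by
          rw [Finset.mem_sdiff]
          refine ⟨Finset.mem_univ _, fun h => ?_⟩
          obtain ⟨i, -, hi⟩ := Finset.mem_image.mp h
          have hik : ((Fin.castLE hk.le i : Fin n) : ℕ) = (i : ℕ) := rfl
          rw [hi] at hik
          have := i.isLt
          omega
        have h := hco ∅ ℓ hmem e
        simpa using h
      have h0 : coeff (0 : Fin n →₀ ℕ) p = 0 := by
        have h := hout ⟨k, hk⟩ (le_refl k) 0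
        simpa using h
      have hin : ∀ i : Fin k, ∀ e, coeff (Finsupp.single (Fin.castLE hk.le i) e) p ∈ I i := by
        intro i e
        have hmem : (Fin.castLE hk.le i) ∈ Finset.univ \
            (((Finset.univ : Finset (Fin k)) \ ({i} : Finset (Fin k))).image (Fin.castLE hk.le)) := by
          rw [Finset.mem_sdiff]
          refine ⟨Finset.mem_univ _, fun h => ?_⟩
          obtain ⟨i', hi', heq⟩ := Finset.mem_image.mp h
          have : i' = i := Fin.castLE_injective hk.le heq
          rw [this] at hi'
          simp at hi'
        have h := hco {i} _ hmem e
        simpa using h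
      rw [hJ, ← support_sum_monomial_coeff p]
      refine Ideal.sum_mem _ fun m hm => ?_
      by_cases hsing : ∃ ℓ : Fin n, ∃ e : ℕ, e ≠ 0 ∧ m = Finsupp.single ℓ e
      · obtain ⟨ℓ, e, he, rfl⟩ := hsing
        by_cases hℓk : (ℓ : ℕ) < k
        · have hcast : Fin.castLE hk.le ⟨(ℓ : ℕ), hℓk⟩ = ℓ := rfl
          have hc := hin ⟨(ℓ : ℕ), hℓk⟩ e
          rw [hcast] at hc
          rw [← monomial_single_eq ℓ he (coeff (Finsupp.single ℓ e) p)]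
          refine Ideal.mul_mem_left _ _ (Ideal.subset_span (Set.mem_union_left _ ?_))
          exact ⟨⟨(ℓ : ℕ), hℓk⟩, _, hc, by rw [hcast]⟩
        · rw [hout ℓ (le_of_not_gt hℓk) e, monomial_zero]
          exact zero_mem _
      · by_cases hm0 : m = 0
        · rw [hm0, h0, monomial_zero]
          exact zero_mem _
        · obtain ⟨ℓ1, hℓ1⟩ := Finsupp.support_nonempty_iff.mpr hm0
          have hex : ∃ ℓ2 ∈ m.support, ℓ2 ≠ ℓ1 := by
            by_contra hno
            push_neg at hno
            have hss : m.support ⊆ {ℓ1} := fun x hx => Finset.mem_singleton.mpr (hno x hx)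
            exact hsing ⟨ℓ1, m ℓ1, Finsupp.mem_support_iff.mp hℓ1,
              Finsupp.support_subset_singleton.mp hss⟩
          obtain ⟨ℓ2, hℓ2, hne⟩ := hex
          have h1 : m ℓ1 ≠ 0 := Finsupp.mem_support_iff.mp hℓ1
          have h2 : m ℓ2 ≠ 0 := Finsupp.mem_support_iff.mp hℓ2
          rcases lt_trichotomy ℓ1 ℓ2 with hlt | heq | hlt
          · rw [← monomial_two_var (Ne.symm hne) h1 h2 (coeff m p)]
            exact Ideal.mul_mem_left _ _
              (Ideal.subset_span (Set.mem_union_right _ ⟨ℓ1, ℓ2, hlt, rfl⟩))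
          · exact absurd heq.symm hne
          · rw [← monomial_two_var hne h2 h1 (coeff m p)]
            exact Ideal.mul_mem_left _ _
              (Ideal.subset_span (Set.mem_union_right _ ⟨ℓ2, ℓ1, hlt, rfl⟩))
end

section
/- Let G be an unmixed chordal graph on [n], let F_1,...,F_m be the facets of Δ(G) with free vertices, let W = {v_1,...,v_m} consist of one chosen free vertex v_i from each F_i, and set B = [n] \ (F_1 ∪ ... ∪ F_m). Then for every minimal vertex cover X of the induced subgraph G|_B, the set X ∪ ((F_1 ∪ ... ∪ F_m) \ W) is a minimal vertex cover of G; in particular the induced subgraph G|_B is again unmixed. -/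
set_option maxHeartbeats 1000000
set_option synthInstance.maxHeartbeats 400000

open MvPolynomial

/-- A vertex cover of `G`: a set of vertices meeting every edge. -/
def SimpleGraph.IsVertexCover' {V : Type*} (G : SimpleGraph V) (C : Finset V) : Prop :=
  ∀ u w, G.Adj u w → u ∈ C ∨ w ∈ C

/-- A minimal vertex cover of `G`: no proper subset is a vertex cover. -/
def SimpleGraph.IsMinVertexCover {V : Type*} (G : SimpleGraph V) (C : Finset V) : Prop :=
  G.IsVertexCover' C ∧ ∀ C' ⊆ C, G.IsVertexCover' C' → C' = C

/-- `G` is unmixed: all minimal vertex covers of `G` have the same cardinality. -/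
def SimpleGraph.Unmixed {V : Type*} (G : SimpleGraph V) : Prop :=
  ∀ C C' : Finset V, G.IsMinVertexCover C → G.IsMinVertexCover C' → C.card = C'.card

/-- The induced subgraph of `G` on a subset `B` of the vertices, viewed as a graph on the
same vertex set (vertices outside `B` become isolated). -/
def SimpleGraph.restrictTo {V : Type*} (G : SimpleGraph V) (B : Finset V) : SimpleGraph V where
  Adj u w := G.Adj u w ∧ u ∈ B ∧ w ∈ B
  symm := ⟨fun _ _ h => ⟨h.1.symm, h.2.2, h.2.1⟩⟩
  loopless := ⟨fun u h => G.loopless.irrefl u h.1⟩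

/-
The vertices of the free facets split into `W` (the chosen free vertices) and `C₀ = ⋃ Fᵢ \ W`.
Every neighbour of a free vertex lies in its own facet, and that facet contains no other chosen
vertex, so all edges at `W` go to `C₀`; hence `X ∪ C₀` covers `G`. Conversely every `x ∈ Fᵢ \ W`
is adjacent to `vᵢ ∉ X ∪ C₀`, so no vertex of `C₀` can be dropped, and a subcover meets `B` in a
cover of `G|_B`, so no vertex of `X` can be dropped either. Since `X ∪ C₀` is a disjoint union,
the cardinalities of the minimal covers of `G|_B` all differ from those of `G` by `|C₀|`.
-/

namespace SimpleGraph

variable {V : Type*} {G H : SimpleGraph V} {B C X : Finset V}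

lemma restrictTo_le : G.restrictTo B ≤ G := fun _ _ h => h.1

lemma IsVertexCover'.mono (hle : H ≤ G) (hC : G.IsVertexCover' C) : H.IsVertexCover' C :=
  fun u w h => hC u w (hle h)

section DecidableEq

variable [DecidableEq V]

lemma IsVertexCover'.inter_restrictTo (hC : (G.restrictTo B).IsVertexCover' C) :
    (G.restrictTo B).IsVertexCover' (C ∩ B) := by
  intro u w h
  rcases hC u w h with hu | hw
  · exact .inl (Finset.mem_inter.mpr ⟨hu, h.2.1⟩)
  · exact .inr (Finset.mem_inter.mpr ⟨hw, h.2.2⟩)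

lemma IsMinVertexCover.subset_of_restrictTo (hX : (G.restrictTo B).IsMinVertexCover X) :
    X ⊆ B := by
  rw [← hX.2 _ Finset.inter_subset_left hX.1.inter_restrictTo]
  exact Finset.inter_subset_right

variable [Fintype V]

lemma isVertexCover'_union_sdiff {U W : Finset V} (hW : ∀ w ∈ W, ∀ u, G.Adj w u → u ∈ U \ W)
    (hX : (G.restrictTo (Finset.univ \ U)).IsVertexCover' X) : G.IsVertexCover' (X ∪ U \ W) := by
  intro a b hab
  by_cases haW : a ∈ W
  · exact .inr (Finset.mem_union_right _ (hW a haW b hab))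
  by_cases hbW : b ∈ W
  · exact .inl (Finset.mem_union_right _ (hW b hbW a hab.symm))
  by_cases ha : a ∈ U
  · exact .inl (Finset.mem_union_right _ (Finset.mem_sdiff.mpr ⟨ha, haW⟩))
  by_cases hb : b ∈ U
  · exact .inr (Finset.mem_union_right _ (Finset.mem_sdiff.mpr ⟨hb, hbW⟩))
  exact (hX a b ⟨hab, by simpa using ha, by simpa using hb⟩).imp
    (Finset.mem_union_left _) (Finset.mem_union_left _)

lemma isMinVertexCover_union_sdiff {U W : Finset V} (hWU : W ⊆ U)
    (hW : ∀ w ∈ W, ∀ u, G.Adj w u → u ∈ U \ W) (hUW : ∀ x ∈ U \ W, ∃ w ∈ W, G.Adj x w)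
    (hX : (G.restrictTo (Finset.univ \ U)).IsMinVertexCover X) :
    G.IsMinVertexCover (X ∪ U \ W) := by
  refine ⟨isVertexCover'_union_sdiff hW hX.1, fun C' hC'X hC' => ?_⟩
  refine Finset.Subset.antisymm hC'X fun x hx => ?_
  rcases Finset.mem_union.mp hx with hxX | hxC
  · have hC'B : C' ∩ (Finset.univ \ U) = X := by
      refine hX.2 _ (fun y hy => ?_) (hC'.mono restrictTo_le).inter_restrictTo
      obtain ⟨hyC', hyB⟩ := Finset.mem_inter.mp hy
      refine (Finset.mem_union.mp (hC'X hyC')).resolve_right fun hyC => ?_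
      exact (Finset.mem_sdiff.mp hyB).2 (Finset.mem_sdiff.mp hyC).1
    exact Finset.mem_of_mem_inter_left (hC'B ▸ hxX : x ∈ C' ∩ _)
  · obtain ⟨w, hwW, hxw⟩ := hUW x hxC
    refine (hC' x w hxw).resolve_right fun hwC' => ?_
    rcases Finset.mem_union.mp (hC'X hwC') with hwX | hwC
    · exact (Finset.mem_sdiff.mp (hX.subset_of_restrictTo hwX)).2 (hWU hwW)
    · exact (Finset.mem_sdiff.mp hwC).2 hwW

end DecidableEq

lemma Unmixed.restrictTo_of_union [DecidableEq V] (hG : G.Unmixed) (hBC : Disjoint B C)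
    (hext : ∀ X, (G.restrictTo B).IsMinVertexCover X → G.IsMinVertexCover (X ∪ C)) :
    (G.restrictTo B).Unmixed := by
  intro X X' hX hX'
  have hcard := hG _ _ (hext X hX) (hext X' hX')
  rwa [Finset.card_union_of_disjoint (hBC.mono_left hX.subset_of_restrictTo),
    Finset.card_union_of_disjoint (hBC.mono_left hX'.subset_of_restrictTo),
    Nat.add_right_cancel_iff] at hcard

variable [Fintype V] {F F' : Finset V} {u w : V}

lemma exists_isFacet_superset (hs : G.IsClique (C : Set V)) : ∃ F, G.IsFacet F ∧ C ⊆ F := by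
  obtain ⟨F, hCF, hF⟩ :=
    Finite.exists_le_maximal (p := fun F : Finset V => G.IsClique (F : Set V)) hs
  exact ⟨F, ⟨hF.1, fun F' hF' hFF' => hF.eq_of_ge hF' hFF'⟩, hCF⟩

lemma IsFreeVertex.mem_of_adj (hv : G.IsFreeVertex F u) (h : G.Adj u w) : w ∈ F := by
  classical
  obtain ⟨F', hF', huwF'⟩ := exists_isFacet_superset (G := G) (C := {u, w}) (by
    rw [Finset.coe_pair]
    exact isClique_pair.mpr fun _ => h)
  exact hv.2 F' hF' (huwF' (by simp)) ▸ huwF' (by simp)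

lemma IsFreeVertex.eq_of_adj (hu : G.IsFreeVertex F u) (hF : G.IsFacet F)
    (hw : G.IsFreeVertex F' w) (h : G.Adj u w) : F = F' :=
  hw.2 F hF (hu.mem_of_adj h)

lemma isMinVertexCover_union_biUnion_sdiff_image [DecidableEq V] {ι : Type*} [Fintype ι]
    {F : ι → Finset V} (hF : ∀ i, G.IsFacet (F i)) (hFinj : Function.Injective F) {v : ι → V}
    (hv : ∀ i, G.IsFreeVertex (F i) (v i))
    (hX : (G.restrictTo (Finset.univ \ Finset.univ.biUnion F)).IsMinVertexCover X) :
    G.IsMinVertexCover (X ∪ (Finset.univ.biUnion F \ Finset.image v Finset.univ)) := by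
  refine isMinVertexCover_union_sdiff ?_ ?_ ?_ hX
  · simp only [Finset.image_subset_iff, Finset.mem_biUnion]
    exact fun i _ => ⟨i, Finset.mem_univ i, (hv i).1⟩
  · simp only [Finset.mem_image, Finset.mem_sdiff, Finset.mem_biUnion]
    rintro _ ⟨i, -, rfl⟩ u hiu
    refine ⟨⟨i, Finset.mem_univ i, (hv i).mem_of_adj hiu⟩, ?_⟩
    rintro ⟨k, -, rfl⟩
    obtain rfl := hFinj ((hv i).eq_of_adj (hF i) (hv k) hiu)
    exact hiu.ne rfl
  · simp only [Finset.mem_image, Finset.mem_sdiff, Finset.mem_biUnion]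
    rintro x ⟨⟨i, -, hxi⟩, hxW⟩
    exact ⟨v i, ⟨i, Finset.mem_univ i, rfl⟩,
      (hF i).1 hxi (hv i).1 fun hxv => hxW ⟨i, Finset.mem_univ i, hxv.symm⟩⟩

end SimpleGraph

theorem minimal_cover_extension_general {n : ℕ} (G : SimpleGraph (Fin n))
    (hunmixed : G.Unmixed) {m : ℕ} (F : Fin m → Finset (Fin n))
    (hFfree : ∀ i, G.IsFreeFacet (F i)) (hFinj : Function.Injective F)
    (v : Fin m → Fin n) (hv : ∀ j, G.IsFreeVertex (F j) (v j)) :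
    (∀ X : Finset (Fin n),
      (G.restrictTo (Finset.univ \ Finset.univ.biUnion F)).IsMinVertexCover X →
      G.IsMinVertexCover
        (X ∪ (Finset.univ.biUnion F \ Finset.image v Finset.univ))) ∧
    (G.restrictTo (Finset.univ \ Finset.univ.biUnion F)).Unmixed := by
  have hext := fun X => SimpleGraph.isMinVertexCover_union_biUnion_sdiff_image (X := X)
    (fun i => (hFfree i).1) hFinj hv
  exact ⟨hext,
    hunmixed.restrictTo_of_union (Finset.sdiff_disjoint.mono_right Finset.sdiff_subset) hext⟩

/-- Let `G` be an unmixed chordal graph on `[n]`, `F_1,…,F_m` the facets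
of `Δ(G)` with free vertices, `W = {v_1,…,v_m}` a choice of one free vertex in each `F_i`,
and `B = [n] \ (F_1 ∪ ⋯ ∪ F_m)`.  Then for every minimal vertex cover `X` of `G|_B`, the
set `X ∪ ((F_1 ∪ ⋯ ∪ F_m) \ W)` is a minimal vertex cover of `G`; in particular `G|_B`
is unmixed. -/
theorem minimal_cover_extension {n : ℕ} (G : SimpleGraph (Fin n))
    (hchordal : G.IsChordal) (hiso : ∀ v : Fin n, ∃ w, G.Adj v w)
    (hunmixed : G.Unmixed) {m : ℕ} (F : Fin m → Finset (Fin n))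
    (hFfree : ∀ i, G.IsFreeFacet (F i)) (hFinj : Function.Injective F)
    (hFall : ∀ F' : Finset (Fin n), G.IsFreeFacet F' → ∃ i, F' = F i)
    (v : Fin m → Fin n) (hv : ∀ j, G.IsFreeVertex (F j) (v j)) :
    (∀ X : Finset (Fin n),
      (G.restrictTo (Finset.univ \ Finset.univ.biUnion F)).IsMinVertexCover X →
      G.IsMinVertexCover
        (X ∪ (Finset.univ.biUnion F \ Finset.image v Finset.univ))) ∧
    (G.restrictTo (Finset.univ \ Finset.univ.biUnion F)).Unmixed :=
  minimal_cover_extension_general G hunmixed F hFfree hFinj v hv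
end
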